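/- arXiv:1601.00837 — 5 statements merged into one kernel-verified Lean document; each statement's English description precedes it below -/
import Mathlib

section
/- Let γ ≥ 1 and 0 < v₊ < 1, and set a = v₊^γ(1−v₊)/(1−v₊^γ). Then there exists a differentiable, strictly decreasing function v̄ : ℝ → ℝ satisfying v̄′(x) = v̄(x)(v̄(x) − 1 + a(v̄(x)^{−γ} − 1)) for all x ∈ ℝ, with v₊ < v̄(x) < 1 for all x, lim_{x→−∞} v̄(x) = 1, and lim_{x→+∞} v̄(x) = v₊. -/
/-!
The profile equation is autonomous, `v' = f v` with `f v = v * g v` and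
`g v = v - 1 + a (v^(-γ) - 1)`. The value of `a` makes `g` vanish at `v₊` as well as at `1`, and
`g` is strictly convex on `(0, ∞)`, so `f < 0` on `(v₊, 1)`. A profile is the inverse of the time
map `G v = ∫ dv / f v`, which is strictly decreasing on `(v₊, 1)`. Since `f` is differentiable and
vanishes at both endpoints, `|f v|` is at most linear in the distance to them, so `G` diverges
logarithmically at both ends and its inverse is defined on all of `ℝ`.
-/

open Filter Topology Set Asymptotics

section Heteroclinic

variable {f G : ℝ → ℝ} {p q : ℝ}

theorem tendsto_log_sub_nhdsGT (p : ℝ) : Tendsto (fun v => Real.log (v - p)) (𝓝[>] p) atBot := by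
  refine Real.tendsto_log_nhdsGT_zero.comp (tendsto_nhdsWithin_iff.2 ⟨?_, ?_⟩)
  · simpa using ((continuous_sub_right p).tendsto p).mono_left nhdsWithin_le_nhds
  · exact eventually_nhdsWithin_of_forall fun v hv => mem_Ioi.2 (sub_pos.2 hv)

theorem tendsto_log_sub_nhdsLT (q : ℝ) : Tendsto (fun v => Real.log (q - v)) (𝓝[<] q) atBot := by
  refine Real.tendsto_log_nhdsGT_zero.comp (tendsto_nhdsWithin_iff.2 ⟨?_, ?_⟩)
  · simpa using ((continuous_sub_left q).tendsto q).mono_left nhdsWithin_le_nhds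
  · exact eventually_nhdsWithin_of_forall fun v hv => mem_Ioi.2 (sub_pos.2 hv)

theorem exists_hasDerivAt_of_continuousOn_Ioo (hpq : p < q) (hf : ContinuousOn f (Ioo p q)) :
    ∃ G : ℝ → ℝ, ∀ v ∈ Ioo p q, HasDerivAt G (f v) v := by
  have hc : (p + q) / 2 ∈ Ioo p q := ⟨by linarith, by linarith⟩
  refine ⟨fun v => ∫ t in (p + q) / 2..v, f t, fun v hv => ?_⟩
  exact intervalIntegral.integral_hasDerivAt_right
    ((hf.mono (ordConnected_Ioo.uIcc_subset hc hv)).intervalIntegrable)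
    (hf.stronglyMeasurableAtFilter isOpen_Ioo v hv) (hf.continuousAt (isOpen_Ioo.mem_nhds hv))

/-- If `|f v| ≤ L (v - p)`, then `G + L⁻¹ log (v - p)` is antitone, so `G` grows at least like
`-L⁻¹ log (v - p)`. -/
theorem tendsto_nhdsGT_atTop_of_isBigO (hpq : p < q)
    (hG : ∀ v ∈ Ioo p q, HasDerivAt G (f v)⁻¹ v) (hneg : ∀ v ∈ Ioo p q, f v < 0)
    (hf : f =O[𝓝[>] p] (· - p)) : Tendsto G (𝓝[>] p) atTop := by
  obtain ⟨L, hL, hfL⟩ := hf.exists_pos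
  obtain ⟨b, hpb : p < b, hb⟩ :=
    mem_nhdsGT_iff_exists_Ioo_subset.1 (hfL.bound.and (Ioo_mem_nhdsGT hpq))
  set H : ℝ → ℝ := fun v => G v + L⁻¹ * Real.log (v - p)
  have hH : ∀ v ∈ Ioo p b, HasDerivAt H ((f v)⁻¹ + L⁻¹ * (v - p)⁻¹) v := fun v hv =>
    ((hG v (hb hv).2).add ((((hasDerivAt_id v).sub_const p).log
      (sub_pos.2 hv.1).ne').const_mul L⁻¹)).congr_deriv (by simp)
  have hH_anti : AntitoneOn H (Ioo p b) := by
    refine antitoneOn_of_hasDerivWithinAt_nonpos (convex_Ioo p b)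
      (fun v hv => (hH v hv).continuousAt.continuousWithinAt)
      (fun v hv => (hH v (interior_subset hv)).hasDerivWithinAt) fun v hv => ?_
    rw [interior_Ioo] at hv
    obtain ⟨hfv, hvI⟩ := hb hv
    have hvp : 0 < v - p := sub_pos.2 hv.1
    rw [Real.norm_eq_abs, Real.norm_eq_abs, abs_of_neg (hneg v hvI), abs_of_pos hvp] at hfv
    have : (L * (v - p))⁻¹ ≤ (-f v)⁻¹ := inv_anti₀ (neg_pos.2 (hneg v hvI)) hfv
    rw [mul_inv, inv_neg] at this
    linarith
  obtain ⟨c, hc⟩ := nonempty_Ioo.2 hpb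
  have hlower : ∀ v ∈ Ioo p c, H c - L⁻¹ * Real.log (v - p) ≤ G v := fun v hv => by
    have := hH_anti ⟨hv.1, hv.2.trans hc.2⟩ hc hv.2.le
    simp only [H] at this
    linarith
  refine tendsto_atTop_mono' _ (mem_of_superset (Ioo_mem_nhdsGT hc.1) hlower) ?_
  exact tendsto_atTop_add_const_left _ _
    ((tendsto_neg_atBot_atTop.comp ((tendsto_log_sub_nhdsGT p).const_mul_atBot
      (inv_pos.2 hL))).congr fun v => by simp [sub_eq_add_neg])

theorem tendsto_nhdsLT_atBot_of_isBigO (hpq : p < q)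
    (hG : ∀ v ∈ Ioo p q, HasDerivAt G (f v)⁻¹ v) (hneg : ∀ v ∈ Ioo p q, f v < 0)
    (hf : f =O[𝓝[<] q] (· - q)) : Tendsto G (𝓝[<] q) atBot := by
  obtain ⟨L, hL, hfL⟩ := hf.exists_pos
  obtain ⟨b, hbq : b < q, hb⟩ :=
    mem_nhdsLT_iff_exists_Ioo_subset.1 (hfL.bound.and (Ioo_mem_nhdsLT hpq))
  set H : ℝ → ℝ := fun v => G v - L⁻¹ * Real.log (q - v)
  have hH : ∀ v ∈ Ioo b q, HasDerivAt H ((f v)⁻¹ + L⁻¹ * (q - v)⁻¹) v := fun v hv =>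
    ((hG v (hb hv).2).sub ((((hasDerivAt_id v).const_sub q).log
      (sub_pos.2 hv.2).ne').const_mul L⁻¹)).congr_deriv (by simp [div_eq_mul_inv])
  have hH_anti : AntitoneOn H (Ioo b q) := by
    refine antitoneOn_of_hasDerivWithinAt_nonpos (convex_Ioo b q)
      (fun v hv => (hH v hv).continuousAt.continuousWithinAt)
      (fun v hv => (hH v (interior_subset hv)).hasDerivWithinAt) fun v hv => ?_
    rw [interior_Ioo] at hv
    obtain ⟨hfv, hvI⟩ := hb hv
    have hqv : 0 < q - v := sub_pos.2 hv.2
    rw [Real.norm_eq_abs, Real.norm_eq_abs, abs_of_neg (hneg v hvI), abs_sub_comm,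
      abs_of_pos hqv] at hfv
    have : (L * (q - v))⁻¹ ≤ (-f v)⁻¹ := inv_anti₀ (neg_pos.2 (hneg v hvI)) hfv
    rw [mul_inv, inv_neg] at this
    linarith
  obtain ⟨c, hc⟩ := nonempty_Ioo.2 hbq
  have hupper : ∀ v ∈ Ioo c q, G v ≤ H c + L⁻¹ * Real.log (q - v) := fun v hv => by
    have := hH_anti hc ⟨hc.1.trans hv.1, hv.2⟩ hv.1.le
    simp only [H] at this
    linarith
  refine tendsto_atBot_mono' _ (mem_of_superset (Ioo_mem_nhdsLT hc.2) hupper) ?_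
  exact tendsto_atBot_add_const_left _ _
    ((tendsto_log_sub_nhdsLT q).const_mul_atBot (inv_pos.2 hL))

theorem exists_strictAnti_rightInverse_of_tendsto (hpq : p < q) (hG : ContinuousOn G (Ioo p q))
    (hG_anti : StrictAntiOn G (Ioo p q)) (htop : Tendsto G (𝓝[>] p) atTop)
    (hbot : Tendsto G (𝓝[<] q) atBot) :
    ∃ u : ℝ → ℝ, StrictAnti u ∧ range u = Ioo p q ∧ ∀ x, G (u x) = x := by
  have hsurj : SurjOn G (Ioo p q) univ := hG.surjOn_of_tendsto' (nonempty_Ioo.2 hpq)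
    ((tendsto_comp_coe_Ioo_atBot hpq).2 htop) ((tendsto_comp_coe_Ioo_atTop hpq).2 hbot)
  choose u hu hGu using fun x => hsurj (mem_univ x)
  refine ⟨u, fun x y hxy => ?_, ?_, hGu⟩
  · by_contra! h
    have := hG_anti.antitoneOn (hu x) (hu y) h
    rw [hGu, hGu] at this
    exact this.not_gt hxy
  · refine (range_subset_iff.2 hu).antisymm fun v hv => ⟨G v, ?_⟩
    exact hG_anti.injOn (hu (G v)) hv (hGu (G v))

theorem Antitone.continuous_of_range_eq_Ioo {u : ℝ → ℝ} (hu : Antitone u)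
    (h : range u = Ioo p q) : Continuous u := by
  refine continuous_iff_continuousAt.2 fun x => ?_
  have hx : u x ∈ Ioo p q := h ▸ mem_range_self x
  have hrange : range u ∈ 𝓝 (u x) := h ▸ Ioo_mem_nhds hx.1 hx.2
  exact continuousAt_of_monotoneOn_of_image_mem_nhds (f := OrderDual.toDual ∘ u)
    (hu.dual_right.monotoneOn univ) univ_mem (by rwa [image_univ])

theorem Antitone.tendsto_atTop_of_range_eq_Ioo {u : ℝ → ℝ} (hu : Antitone u)
    (h : range u = Ioo p q) : Tendsto u atTop (𝓝 p) := by
  have hpq : p < q := nonempty_Ioo.1 (h ▸ range_nonempty u)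
  have := tendsto_atTop_ciInf hu (h ▸ bddBelow_Ioo)
  rwa [iInf, h, csInf_Ioo hpq] at this

theorem Antitone.tendsto_atBot_of_range_eq_Ioo {u : ℝ → ℝ} (hu : Antitone u)
    (h : range u = Ioo p q) : Tendsto u atBot (𝓝 q) := by
  have hpq : p < q := nonempty_Ioo.1 (h ▸ range_nonempty u)
  have := tendsto_atBot_ciSup hu (h ▸ bddAbove_Ioo)
  rwa [iSup, h, csSup_Ioo hpq] at this

theorem exists_heteroclinic_of_isBigO (hpq : p < q) (hcont : ContinuousOn f (Ioo p q))
    (hneg : ∀ v ∈ Ioo p q, f v < 0) (hp : f =O[𝓝[>] p] (· - p)) (hq : f =O[𝓝[<] q] (· - q)) :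
    ∃ u : ℝ → ℝ, (∀ x, HasDerivAt u (f (u x)) x) ∧ StrictAnti u ∧ range u = Ioo p q ∧
      Tendsto u atBot (𝓝 q) ∧ Tendsto u atTop (𝓝 p) := by
  obtain ⟨G, hG⟩ :=
    exists_hasDerivAt_of_continuousOn_Ioo hpq (hcont.inv₀ fun v hv => (hneg v hv).ne)
  have hG_anti : StrictAntiOn G (Ioo p q) :=
    strictAntiOn_of_hasDerivWithinAt_neg (convex_Ioo p q)
      (fun v hv => (hG v hv).continuousAt.continuousWithinAt)
      (fun v hv => (hG v (interior_subset hv)).hasDerivWithinAt)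
      fun v hv => inv_lt_zero.2 (hneg v (interior_subset hv))
  obtain ⟨u, hu, hrange, hGu⟩ := exists_strictAnti_rightInverse_of_tendsto hpq
    (fun v hv => (hG v hv).continuousAt.continuousWithinAt) hG_anti
    (tendsto_nhdsGT_atTop_of_isBigO hpq hG hneg hp)
    (tendsto_nhdsLT_atBot_of_isBigO hpq hG hneg hq)
  refine ⟨u, fun x => ?_, hu, hrange, hu.antitone.tendsto_atBot_of_range_eq_Ioo hrange,
    hu.antitone.tendsto_atTop_of_range_eq_Ioo hrange⟩
  have hx : u x ∈ Ioo p q := hrange ▸ mem_range_self x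
  simpa using (hG (u x) hx).of_local_left_inverse
    (hu.antitone.continuous_of_range_eq_Ioo hrange).continuousAt (inv_ne_zero (hneg _ hx).ne)
    (Eventually.of_forall hGu)

end Heteroclinic

section Profile

variable {γ a v vp : ℝ}

noncomputable def profileFactor (γ a v : ℝ) : ℝ := v - 1 + a * (v ^ (-γ) - 1)

theorem hasDerivAt_profileFactor (hv : 0 < v) :
    HasDerivAt (profileFactor γ a) (1 - a * γ * v ^ (-γ - 1)) v := by
  have := ((hasDerivAt_id v).sub_const 1).add
    (((Real.hasDerivAt_rpow_const (p := -γ) (Or.inl hv.ne')).sub_const 1).const_mul a)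
  exact this.congr_deriv (by ring)

theorem strictConvexOn_profileFactor (hγ : 0 < γ) (ha : 0 < a) :
    StrictConvexOn ℝ (Ioi 0) (profileFactor γ a) := by
  refine StrictMonoOn.strictConvexOn_of_deriv (convex_Ioi 0)
    (fun v hv => (hasDerivAt_profileFactor hv).continuousAt.continuousWithinAt) ?_
  rw [interior_Ioi]
  intro v (hv : 0 < v) w _ hvw
  rw [(hasDerivAt_profileFactor hv).deriv, (hasDerivAt_profileFactor (hv.trans hvw)).deriv]
  have := Real.rpow_lt_rpow_of_neg hv hvw (by linarith : -γ - 1 < 0)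
  nlinarith [mul_pos ha hγ]

theorem profileFactor_one : profileFactor γ a 1 = 0 := by
  simp [profileFactor]

theorem profileFactor_eq_zero (hγ : 0 < γ) (h0 : 0 < vp) (h1 : vp < 1) :
    profileFactor γ (vp ^ γ * (1 - vp) / (1 - vp ^ γ)) vp = 0 := by
  have hpow : vp ^ γ < 1 := Real.rpow_lt_one h0.le h1 hγ
  rw [profileFactor, Real.rpow_neg h0.le]
  field_simp [(Real.rpow_pos_of_pos h0 γ).ne', (sub_pos.2 hpow).ne']
  ring

theorem profileFactor_neg (hγ : 0 < γ) (h0 : 0 < vp) (h1 : vp < 1) (hv : v ∈ Ioo vp 1) :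
    profileFactor γ (vp ^ γ * (1 - vp) / (1 - vp ^ γ)) v < 0 := by
  have ha : 0 < vp ^ γ * (1 - vp) / (1 - vp ^ γ) :=
    div_pos (mul_pos (Real.rpow_pos_of_pos h0 γ) (sub_pos.2 h1))
      (sub_pos.2 (Real.rpow_lt_one h0.le h1 hγ))
  have := (strictConvexOn_profileFactor hγ ha).lt_on_openSegment (mem_Ioi.2 h0)
    (mem_Ioi.2 one_pos) h1.ne (by rwa [openSegment_eq_Ioo h1])
  rwa [profileFactor_eq_zero hγ h0 h1, profileFactor_one, max_self] at this

end Profile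

/-- Existence of the viscous shock profile: for `γ ≥ 1` and `0 < v₊ < 1`, with
`a = v₊^γ(1−v₊)/(1−v₊^γ)`, there is a differentiable strictly decreasing solution of the
profile ODE `v' = v(v − 1 + a(v^{−γ} − 1))` lying in `(v₊, 1)` and connecting `1` at `−∞`
to `v₊` at `+∞`. -/
theorem profile_existence
    (γ vp : ℝ) (hγ : 1 ≤ γ) (hvp0 : 0 < vp) (hvp1 : vp < 1)
    (a : ℝ) (ha : a = vp ^ γ * (1 - vp) / (1 - vp ^ γ)) :
    ∃ vbar : ℝ → ℝ,
      (∀ x : ℝ, HasDerivAt vbar (vbar x * (vbar x - 1 + a * ((vbar x) ^ (-γ) - 1))) x) ∧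
      StrictAnti vbar ∧
      (∀ x : ℝ, vp < vbar x ∧ vbar x < 1) ∧
      Tendsto vbar atBot (𝓝 1) ∧
      Tendsto vbar atTop (𝓝 vp) := by
  subst ha
  have hγ0 : 0 < γ := by linarith
  set f : ℝ → ℝ := fun v => v * profileFactor γ (vp ^ γ * (1 - vp) / (1 - vp ^ γ)) v
  have hf : ∀ v, 0 < v → DifferentiableAt ℝ f v := fun v hv =>
    ((hasDerivAt_id v).mul (hasDerivAt_profileFactor hv)).differentiableAt
  have hp : f =O[𝓝[>] vp] (· - vp) := by
    simpa [f, profileFactor_eq_zero hγ0 hvp0 hvp1] using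
      (hf vp hvp0).hasDerivAt.isBigO_sub.mono nhdsWithin_le_nhds
  have hq : f =O[𝓝[<] 1] (· - 1) := by
    simpa [f, profileFactor_one] using
      (hf 1 one_pos).hasDerivAt.isBigO_sub.mono nhdsWithin_le_nhds
  obtain ⟨u, hu_deriv, hu_anti, hu_range, hu_bot, hu_top⟩ := exists_heteroclinic_of_isBigO hvp1
    (fun v hv => (hf v (hvp0.trans hv.1)).continuousAt.continuousWithinAt)
    (fun v hv => mul_neg_of_pos_of_neg (hvp0.trans hv.1) (profileFactor_neg hγ0 hvp0 hvp1 hv))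
    hp hq
  exact ⟨u, hu_deriv, hu_anti, fun x => show u x ∈ Ioo vp 1 from hu_range ▸ mem_range_self x,
    hu_bot, hu_top⟩
end

section
/- Let γ ≥ 1 and 0 < v₊ < 1, and set a = v₊^γ(1−v₊)/(1−v₊^γ). Define g̃(v) = v − 1 + a(v^{−γ} − 1) for v > 0. Then g̃(v₊) = 0, g̃(1) = 0, and g̃(v) < 0 for every v with v₊ < v < 1. -/
/-!
`g̃(v) = a v^{-γ} + (v - 1 - a)` is a positive multiple of the strictly convex function `v^{-γ}`
plus an affine function, hence strictly convex on `(0, ∞)`. The choice of `a` is exactly the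
condition `g̃(v₊) = 0`, and `g̃(1) = 0` for every `a`; a strictly convex function is strictly
below the chord through two of its zeros.
-/

open Set

theorem StrictConvexOn.const_mul {𝕜 E : Type*} [Field 𝕜] [LinearOrder 𝕜] [IsStrictOrderedRing 𝕜]
    [AddCommMonoid E] [Module 𝕜 E] {s : Set E} {f : E → 𝕜} (hf : StrictConvexOn 𝕜 s f)
    {c : 𝕜} (hc : 0 < c) : StrictConvexOn 𝕜 s fun x => c * f x :=
  ⟨hf.1, fun _ hx _ hy hxy _ _ ha hb hab => by
    simpa only [smul_eq_mul, mul_add, mul_left_comm c] using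
      mul_lt_mul_of_pos_left (hf.2 hx hy hxy ha hb hab) hc⟩

theorem StrictConvexOn.neg_of_mem_Ioo {s : Set ℝ} {f : ℝ → ℝ} (hf : StrictConvexOn ℝ s f)
    {x y z : ℝ} (hx : x ∈ s) (hy : y ∈ s) (hfx : f x = 0) (hfy : f y = 0) (hz : z ∈ Ioo x y) :
    f z < 0 := by
  have hxy : x < y := hz.1.trans hz.2
  simpa [hfx, hfy] using
    hf.lt_on_openSegment hx hy hxy.ne (by rwa [openSegment_eq_Ioo hxy])

theorem strictConvexOn_rpow_neg {p : ℝ} (hp : 0 < p) :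
    StrictConvexOn ℝ (Ioi 0) fun x : ℝ => x ^ (-p) := by
  have hderiv : deriv (fun x : ℝ => x ^ (-p)) = fun x => -p * x ^ (-p - 1) :=
    funext fun x => Real.deriv_rpow_const x (-p)
  refine StrictMonoOn.strictConvexOn_of_deriv (convex_Ioi 0)
    (continuousOn_id.rpow_const fun x hx => Or.inl (ne_of_gt hx)) ?_
  rw [interior_Ioi, hderiv]
  intro x hx y _ hxy
  have : y ^ (-p - 1) < x ^ (-p - 1) := Real.rpow_lt_rpow_of_neg hx hxy (by linarith)
  nlinarith

noncomputable def profileNonlinearity (a γ v : ℝ) : ℝ := v - 1 + a * (v ^ (-γ) - 1)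

theorem strictConvexOn_profileNonlinearity {a γ : ℝ} (ha : 0 < a) (hγ : 0 < γ) :
    StrictConvexOn ℝ (Ioi 0) (profileNonlinearity a γ) := by
  have hsum := ((strictConvexOn_rpow_neg hγ).const_mul ha).add_convexOn
    ((convexOn_id (convex_Ioi (0 : ℝ))).add_const (-1 - a))
  refine hsum.congr fun v _ => ?_
  simp only [profileNonlinearity, Pi.add_apply, id]
  ring

theorem profileNonlinearity_one (a γ : ℝ) : profileNonlinearity a γ 1 = 0 := by
  simp [profileNonlinearity]

theorem profileNonlinearity_self {γ v : ℝ} (hv : 0 < v) (hvγ : v ^ γ ≠ 1) :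
    profileNonlinearity (v ^ γ * (1 - v) / (1 - v ^ γ)) γ v = 0 := by
  have hden : 1 - v ^ γ ≠ 0 := sub_ne_zero.mpr hvγ.symm
  rw [profileNonlinearity, Real.rpow_neg hv.le]
  field_simp
  ring

/-- The nonlinearity `g̃(v) = v − 1 + a(v^{−γ} − 1)` of the profile ODE, with
`a = v₊^γ(1−v₊)/(1−v₊^γ)`, vanishes at `v = v₊` and `v = 1` and is strictly negative on
the open interval `(v₊, 1)`. -/
theorem profile_nonlinearity_sign
    (γ vp : ℝ) (hγ : 1 ≤ γ) (hvp0 : 0 < vp) (hvp1 : vp < 1)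
    (a : ℝ) (ha : a = vp ^ γ * (1 - vp) / (1 - vp ^ γ))
    (g : ℝ → ℝ) (hg : ∀ v : ℝ, 0 < v → g v = v - 1 + a * (v ^ (-γ) - 1)) :
    g vp = 0 ∧ g 1 = 0 ∧ ∀ v : ℝ, vp < v → v < 1 → g v < 0 := by
  have hγ0 : 0 < γ := by linarith
  have hvpγ : vp ^ γ < 1 := Real.rpow_lt_one hvp0.le hvp1 hγ0
  have ha0 : 0 < a := by
    rw [ha]
    exact div_pos (mul_pos (Real.rpow_pos_of_pos hvp0 γ) (by linarith)) (by linarith)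
  have hgvp : profileNonlinearity a γ vp = 0 := ha ▸ profileNonlinearity_self hvp0 hvpγ.ne
  refine ⟨(hg vp hvp0).trans hgvp, (hg 1 one_pos).trans (profileNonlinearity_one a γ),
    fun v hvpv hv1 => ?_⟩
  rw [hg v (hvp0.trans hvpv)]
  exact (strictConvexOn_profileNonlinearity ha0 hγ0).neg_of_mem_Ioo hvp0 (mem_Ioi.2 one_pos) hgvp
    (profileNonlinearity_one a γ) ⟨hvpv, hv1⟩
end

section
/- Let γ = 5/3 and 0 < v₊ < 1, and set a = v₊^γ(1−v₊)/(1−v₊^γ), h(v) = −v^{γ+1} + a(γ−1) + (a+1)v^γ, f(v) = v − v^{−γ}h(v). For λ ∈ ℂ with Re λ > 0, let A₋(λ) be the 3×3 complex matrix with rows (0, λ, 1), (0, 0, 1), (λ, λ, f(1) − λ), and A₊(λ) the 3×3 matrix with rows (0, λ, 1), (0, 0, 1), (λv₊, λv₊, f(v₊) − λ). Then no eigenvalue of A₋(λ) or of A₊(λ) is purely imaginary; counted with algebraic multiplicity, A₋(λ) has exactly one eigenvalue with positive real part (and two with negative real part), and A₊(λ) has exactly two eigenvalues with negative real part (and one with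 positive real part). -/
/-!
Both limiting matrices have characteristic polynomial `μ³ + (λ - F) μ² - 2vλμ - vλ²`, with
`(v, F) = (1, f 1)` for `A₋` and `(v₊, f v₊)` for `A₊`; in both cases `0 < v` and `F < v`,
because `h 1 = h v₊ = aγ > 0`.

For `μ = iy` the imaginary part of the equation factors as `(y + Im λ)(y² + 2v Re λ) = 0`, and
with `Im λ = -y` the real part becomes `-y²(Re λ + v - F) - v (Re λ)² < 0`; so no root is purely
imaginary while `Re λ > 0`.

The roots of a monic polynomial depend continuously on its coefficients: near a root `b` of `p₀`
the identity `|p(b)| = ∏ |b - μᵢ|` produces a root of `p`, and one deflates both polynomials by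
the linear factor. Hence the number of roots with positive real part is
locally constant, so constant on the connected half-plane `Re λ > 0`. At a suitable real `λ`
the cubic has an explicit positive root whose quadratic cofactor has positive coefficients, so
the number is `1`.
-/

open Polynomial Filter Topology
open scoped Classical NNReal

theorem eventually_mem_iff_of_notMem_frontier {X : Type*} [TopologicalSpace X] {s : Set X}
    {x : X} (hx : x ∉ frontier s) : ∀ᶠ y in 𝓝 x, (y ∈ s ↔ x ∈ s) := by
  rw [← Set.mem_compl_iff, compl_frontier_eq_union_interior] at hx
  rcases hx with h | h
  · filter_upwards [mem_interior_iff_mem_nhds.mp h] with y hy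
    simp [hy, interior_subset h]
  · filter_upwards [mem_interior_iff_mem_nhds.mp h] with y hy
    simp [show y ∉ s from hy, show x ∉ s from interior_subset h]

theorem tendsto_of_nnnorm_sub_pow_le {E ι : Type*} [SeminormedAddCommGroup E] {F : Filter ι}
    {a : ι → E} {b : E} {e : ι → ℝ≥0} {n : ℕ} (hn : n ≠ 0) (he : Tendsto e F (𝓝 0))
    (h : ∀ k, ‖b - a k‖₊ ^ n ≤ e k) : Tendsto a F (𝓝 b) := by
  have hbound : ∀ k, ‖b - a k‖₊ ≤ e k ^ (n⁻¹ : ℝ) := fun k => by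
    simpa [NNReal.pow_rpow_inv_natCast _ hn] using
      NNReal.rpow_le_rpow (h k) (by positivity : (0 : ℝ) ≤ (n⁻¹ : ℝ))
  have hlim : Tendsto (fun k => e k ^ (n⁻¹ : ℝ)) F (𝓝 0) := by
    have := ((NNReal.continuous_rpow_const (inv_nonneg.mpr n.cast_nonneg)).tendsto 0).comp he
    rwa [NNReal.zero_rpow (inv_ne_zero (Nat.cast_ne_zero.mpr hn))] at this
  rw [tendsto_iff_norm_sub_tendsto_zero]
  simpa [norm_sub_rev] using NNReal.tendsto_coe.mpr
    (tendsto_of_tendsto_of_tendsto_of_le_of_le tendsto_const_nhds hlim (fun _ => zero_le) hbound)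

namespace Polynomial

theorem Monic.exists_mem_roots_nnnorm_sub_pow_le {p : ℂ[X]} (hp : p.Monic)
    (hdeg : p.natDegree ≠ 0) (z : ℂ) :
    ∃ a ∈ p.roots, ‖z - a‖₊ ^ p.natDegree ≤ ‖p.eval z‖₊ := by
  have hroots : p.roots.toFinset.Nonempty := by
    rw [Multiset.toFinset_nonempty, ← Multiset.card_pos, IsAlgClosed.card_roots_eq_natDegree]
    omega
  obtain ⟨a, ha, hmin⟩ := p.roots.toFinset.exists_min_image (fun b => ‖z - b‖₊) hroots
  refine ⟨a, Multiset.mem_toFinset.mp ha, ?_⟩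
  have hprod : ‖p.eval z‖₊ = (p.roots.map fun b => ‖z - b‖₊).prod := by
    conv_lhs => rw [← prod_multiset_X_sub_C_of_monic_of_roots_card_eq hp
      IsAlgClosed.card_roots_eq_natDegree]
    rw [eval_multiset_prod, ← nnnormHom_apply, map_multiset_prod, Multiset.map_map,
      Multiset.map_map]
    simp [Function.comp_def]
  rw [hprod, ← IsAlgClosed.card_roots_eq_natDegree, ← Multiset.card_map (fun b => ‖z - b‖₊)]
  refine Multiset.pow_card_le_prod fun x hx => ?_
  obtain ⟨b, hb, rfl⟩ := Multiset.mem_map.mp hx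
  exact hmin b (Multiset.mem_toFinset.mpr hb)

theorem roots_eq_cons_roots_divByMonic {R : Type*} [CommRing R] [IsDomain R] {p : R[X]}
    (hp : p ≠ 0) {a : R} (ha : p.IsRoot a) : p.roots = a ::ₘ (p /ₘ (X - C a)).roots := by
  conv_lhs => rw [← mul_divByMonic_eq_iff_isRoot.mpr ha]
  rw [roots_mul (by rwa [mul_divByMonic_eq_iff_isRoot.mpr ha]), roots_X_sub_C,
    Multiset.singleton_add]

theorem Monic.divByMonic_X_sub_C {R : Type*} [CommRing R] {p : R[X]} (hp : p.Monic) {a : R}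
    (ha : p.IsRoot a) : (p /ₘ (X - C a)).Monic :=
  (monic_X_sub_C a).of_mul_monic_left (by rwa [mul_divByMonic_eq_iff_isRoot.mpr ha])

section TendstoCoeff

variable {R ι : Type*} [CommRing R] [TopologicalSpace R] [IsTopologicalRing R] {F : Filter ι}
  {p : ι → R[X]} {p₀ : R[X]} {n : ℕ}

theorem tendsto_eval_of_tendsto_coeff (hdeg : ∀ k, (p k).natDegree ≤ n)
    (hdeg₀ : p₀.natDegree ≤ n) (hcoeff : ∀ i, Tendsto (fun k => (p k).coeff i) F (𝓝 (p₀.coeff i)))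
    (z : R) : Tendsto (fun k => (p k).eval z) F (𝓝 (p₀.eval z)) := by
  simp only [eval_eq_sum_range' (Nat.lt_succ_of_le (hdeg _)),
    eval_eq_sum_range' (Nat.lt_succ_of_le hdeg₀)]
  exact tendsto_finsetSum _ fun i _ => (hcoeff i).mul_const _

theorem tendsto_coeff_divByMonic_X_sub_C (hdeg : ∀ k, (p k).natDegree = n)
    (hdeg₀ : p₀.natDegree = n) (hcoeff : ∀ i, Tendsto (fun k => (p k).coeff i) F (𝓝 (p₀.coeff i)))
    {a : ι → R} {b : R} (ha : Tendsto a F (𝓝 b)) (i : ℕ) :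
    Tendsto (fun k => (p k /ₘ (X - C (a k))).coeff i) F (𝓝 ((p₀ /ₘ (X - C b)).coeff i)) := by
  simp only [coeff_divByMonic_X_sub_C, hdeg, hdeg₀]
  exact tendsto_finsetSum _ fun j _ => (ha.pow _).mul (hcoeff j)

end TendstoCoeff

theorem eventually_card_filter_roots_eq {ι : Type*} {F : Filter ι} {U : Set ℂ} :
    ∀ (n : ℕ) {p : ι → ℂ[X]} {p₀ : ℂ[X]}, (∀ k, (p k).Monic) → p₀.Monic →
      (∀ k, (p k).natDegree = n) → p₀.natDegree = n → (∀ b ∈ p₀.roots, b ∉ frontier U) →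
      (∀ i, Tendsto (fun k => (p k).coeff i) F (𝓝 (p₀.coeff i))) →
      ∀ᶠ k in F, ((p k).roots.filter (· ∈ U)).card = (p₀.roots.filter (· ∈ U)).card
  | 0, p, p₀, hp, hp₀, hdeg, hdeg₀, _, _ => .of_forall fun k => by
    rw [eq_one_of_monic_natDegree_zero (hp k) (hdeg k), eq_one_of_monic_natDegree_zero hp₀ hdeg₀]
  | n + 1, p, p₀, hp, hp₀, hdeg, hdeg₀, hU, hcoeff => by
    obtain ⟨b, hb⟩ := IsAlgClosed.exists_root p₀ (by
      rw [degree_eq_natDegree hp₀.ne_zero, hdeg₀]; exact_mod_cast n.succ_ne_zero)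
    choose a ha hclose using fun k =>
      (hp k).exists_mem_roots_nnnorm_sub_pow_le (by rw [hdeg k]; exact n.succ_ne_zero) b
    have hroot : ∀ k, (p k).IsRoot (a k) := fun k => isRoot_of_mem_roots (ha k)
    have ha_lim : Tendsto a F (𝓝 b) := by
      have heval := (tendsto_eval_of_tendsto_coeff (fun k => (hdeg k).le) hdeg₀.le hcoeff b).nnnorm
      rw [hb.eq_zero, nnnorm_zero] at heval
      exact tendsto_of_nnnorm_sub_pow_le n.succ_ne_zero heval fun k => by
        simpa only [hdeg k] using hclose k
    have hdeg_div : ∀ {r : ℂ[X]} {c : ℂ}, r.natDegree = n + 1 → (r /ₘ (X - C c)).natDegree = n :=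
      fun hr => by rw [natDegree_divByMonic _ (monic_X_sub_C _), hr, natDegree_X_sub_C]; rfl
    have ih := eventually_card_filter_roots_eq n (fun k => (hp k).divByMonic_X_sub_C (hroot k))
      (hp₀.divByMonic_X_sub_C hb) (fun k => hdeg_div (hdeg k)) (hdeg_div hdeg₀)
      (fun c hc => hU c (by
        rw [roots_eq_cons_roots_divByMonic hp₀.ne_zero hb]; exact Multiset.mem_cons_of_mem hc))
      (tendsto_coeff_divByMonic_X_sub_C hdeg hdeg₀ hcoeff ha_lim)
    filter_upwards [ih, ha_lim.eventually (eventually_mem_iff_of_notMem_frontier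
      (hU b ((mem_roots hp₀.ne_zero).mpr hb)))] with k hk hak
    rw [roots_eq_cons_roots_divByMonic (hp k).ne_zero (hroot k),
      roots_eq_cons_roots_divByMonic hp₀.ne_zero hb, Multiset.filter_cons, Multiset.filter_cons,
      Multiset.card_add, Multiset.card_add, hk]
    by_cases hbU : b ∈ U <;> simp [hbU, hak]

end Polynomial

theorem Complex.re_neg_of_sq_add_mul_add_eq_zero {B c : ℝ} (hB : 0 < B) (hc : 0 < c) {z : ℂ}
    (hz : z ^ 2 + B * z + c = 0) : z.re < 0 := by
  have h1 := congrArg Complex.re hz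
  have h2 := congrArg Complex.im hz
  simp only [Complex.add_re, Complex.add_im, Complex.mul_re, Complex.mul_im,
    Complex.ofReal_re, Complex.ofReal_im, pow_two, Complex.zero_re, Complex.zero_im] at h1 h2
  have hfac : z.im * (2 * z.re + B) = 0 := by linear_combination h2
  rcases mul_eq_zero.mp hfac with h | h
  · rw [h] at h1
    nlinarith
  · linarith

noncomputable def splittingCubic (v F : ℝ) (l : ℂ) : ℂ[X] :=
  X ^ 3 + C (l - F) * X ^ 2 - C (2 * v * l) * X - C (v * l ^ 2)

section splittingCubic

variable {v F : ℝ} {l : ℂ}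

theorem charpoly_limitMatrix (v F : ℝ) (l : ℂ) :
    (!![0, l, 1; 0, 0, 1; l * (v : ℂ), l * (v : ℂ), (F : ℂ) - l]).charpoly =
      splittingCubic v F l := by
  rw [Matrix.charpoly, Matrix.det_fin_three, splittingCubic]
  simp [Matrix.charmatrix, map_ofNat]
  ring

theorem splittingCubic_monic (v F : ℝ) (l : ℂ) : (splittingCubic v F l).Monic := by
  unfold splittingCubic; monicity!

theorem splittingCubic_natDegree (v F : ℝ) (l : ℂ) : (splittingCubic v F l).natDegree = 3 := by
  unfold splittingCubic; compute_degree!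

theorem continuous_coeff_splittingCubic (v F : ℝ) (i : ℕ) :
    Continuous fun l => (splittingCubic v F l).coeff i := by
  simp only [splittingCubic, coeff_add, coeff_sub, coeff_X_pow, coeff_C_mul, coeff_X, coeff_C]
  split_ifs <;> fun_prop

theorem re_ne_zero_of_isRoot_splittingCubic (hv : 0 < v) (hF : F < v) (hl : 0 < l.re) {μ : ℂ}
    (hμ : (splittingCubic v F l).IsRoot μ) : μ.re ≠ 0 := by
  intro hre
  have heval : μ ^ 3 + (l - F) * μ ^ 2 - 2 * v * l * μ - v * l ^ 2 = 0 := by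
    simpa [splittingCubic] using hμ.eq_zero
  have h1 := congrArg Complex.re heval
  have h2 := congrArg Complex.im heval
  simp only [Complex.add_re, Complex.sub_re, Complex.mul_re, Complex.mul_im,
    Complex.add_im, Complex.sub_im, Complex.ofReal_re, Complex.ofReal_im,
    Complex.zero_re, Complex.zero_im, pow_succ, pow_zero, one_mul,
    Complex.re_ofNat, Complex.im_ofNat, hre] at h1 h2
  have hfac : (μ.im + l.im) * (μ.im ^ 2 + 2 * v * l.re) = 0 := by linear_combination -h2
  have him : l.im = -μ.im := by
    rcases mul_eq_zero.mp hfac with h | h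
    · linarith
    · nlinarith [sq_nonneg μ.im, mul_pos hv hl]
  rw [him] at h1
  nlinarith [sq_nonneg μ.im, mul_pos hv (mul_pos hl hl)]

theorem splittingCubic_eq_mul {r B c : ℝ} {l : ℝ} (h₂ : B - r = l - F)
    (h₁ : c - r * B = -(2 * v * l)) (h₀ : r * c = v * l ^ 2) :
    splittingCubic v F l = (X - C (r : ℂ)) * (X ^ 2 + C (B : ℂ) * X + C (c : ℂ)) := by
  have e₂ : ((l : ℂ) - F) = B - r := by exact_mod_cast h₂.symm
  have e₁ : (2 * v * l : ℂ) = -(c - r * B) := by exact_mod_cast (neg_eq_iff_eq_neg.mpr h₁).symm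
  have e₀ : (v * l ^ 2 : ℂ) = r * c := by exact_mod_cast h₀.symm
  rw [splittingCubic, e₂, e₁, e₀]
  simp only [map_sub, map_mul, map_neg]
  ring

theorem exists_card_filter_re_pos_roots_splittingCubic_eq_one (hv : 0 < v) (hF : F < v) :
    ∃ l : ℂ, 0 < l.re ∧ ((splittingCubic v F l).roots.filter fun μ => 0 < μ.re).card = 1 := by
  obtain ⟨d, hd, rfl⟩ : ∃ d, 0 < d ∧ F = v - d := ⟨v - F, sub_pos.mpr hF, by ring⟩
  -- The cubic reads `μ²(μ + λ + d) = v(μ + λ)²`; these values make `r` a root at `λ = l`.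
  obtain ⟨r, hr⟩ : ∃ r : ℝ, r = (v ^ 2 + v * d + d ^ 2) / (v + d) := ⟨_, rfl⟩
  obtain ⟨l, hl⟩ : ∃ l : ℝ, l = d * r / v := ⟨_, rfl⟩
  have hvr : v < r := by rw [hr, lt_div_iff₀ (by positivity)]; nlinarith
  have hl_pos : 0 < l := by rw [hl]; exact div_pos (mul_pos hd (hv.trans hvr)) hv
  have hB : 0 < l - (v - d) + r := by linarith
  have hc : 0 < v * l ^ 2 / r := by have := hv.trans hvr; positivity
  have hfac := splittingCubic_eq_mul (v := v) (F := v - d) (l := l) (r := r)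
    (B := l - (v - d) + r) (c := v * l ^ 2 / r) (by ring)
    (by rw [hl, hr]; field_simp; ring) (by field_simp [(hv.trans hvr).ne'])
  have hquad : (X ^ 2 + C ((l - (v - d) + r : ℝ) : ℂ) * X + C ((v * l ^ 2 / r : ℝ) : ℂ)) ≠ 0 :=
    Monic.ne_zero (by monicity!)
  refine ⟨l, by simpa using hl_pos, ?_⟩
  rw [hfac, roots_mul (mul_ne_zero (X_sub_C_ne_zero _) hquad), roots_X_sub_C,
    Multiset.singleton_add, Multiset.filter_cons_of_pos _ (by simpa using hv.trans hvr),
    Multiset.filter_eq_nil.mpr ?_]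
  · rfl
  · intro z hz
    have hz' := (mem_roots hquad).mp hz
    simp only [IsRoot, eval_add, eval_mul, eval_pow, eval_X, eval_C] at hz'
    exact (Complex.re_neg_of_sq_add_mul_add_eq_zero hB hc hz').not_gt

theorem card_filter_re_pos_roots_splittingCubic (hv : 0 < v) (hF : F < v) (hl : 0 < l.re) :
    ((splittingCubic v F l).roots.filter fun μ => 0 < μ.re).card = 1 := by
  let N : ℂ → ℕ := fun l => ((splittingCubic v F l).roots.filter fun μ => 0 < μ.re).card
  have hN : ContinuousOn N {l | 0 < l.re} := fun l₀ hl₀ => by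
    rw [ContinuousWithinAt, nhds_discrete, tendsto_pure]
    refine (eventually_card_filter_roots_eq (U := {μ | 0 < μ.re}) 3
      (fun _ => splittingCubic_monic v F _) (splittingCubic_monic v F l₀)
      (fun _ => splittingCubic_natDegree v F _) (splittingCubic_natDegree v F l₀) ?_
      fun i => (continuous_coeff_splittingCubic v F i).continuousWithinAt).mono fun _ h => h
    rw [Complex.frontier_setOfPred_lt_re]
    exact fun μ hμ => re_ne_zero_of_isRoot_splittingCubic hv hF hl₀ (isRoot_of_mem_roots hμ)
  obtain ⟨l₀, hl₀, hN₀⟩ := exists_card_filter_re_pos_roots_splittingCubic_eq_one hv hF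
  exact ((convex_halfSpace_re_gt 0).isPreconnected.constant hN hl hl₀).trans hN₀

theorem splittingCubic_roots_split (hv : 0 < v) (hF : F < v) (hl : 0 < l.re) :
    (∀ μ ∈ (splittingCubic v F l).roots, μ.re ≠ 0) ∧
    ((splittingCubic v F l).roots.filter fun μ => 0 < μ.re).card = 1 ∧
    ((splittingCubic v F l).roots.filter fun μ => μ.re < 0).card = 2 := by
  have hre : ∀ μ ∈ (splittingCubic v F l).roots, μ.re ≠ 0 := fun μ hμ =>
    re_ne_zero_of_isRoot_splittingCubic hv hF hl (isRoot_of_mem_roots hμ)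
  have hpos := card_filter_re_pos_roots_splittingCubic hv hF hl
  have hneg : (splittingCubic v F l).roots.filter (fun μ => ¬ 0 < μ.re) =
      (splittingCubic v F l).roots.filter (fun μ => μ.re < 0) :=
    Multiset.filter_congr fun μ hμ => not_lt.trans (hre μ hμ).le_iff_lt
  have htotal := congrArg Multiset.card (Multiset.filter_add_not (fun μ => 0 < μ.re)
    (splittingCubic v F l).roots)
  rw [Multiset.card_add, hneg, hpos, IsAlgClosed.card_roots_eq_natDegree,
    splittingCubic_natDegree] at htotal
  exact ⟨hre, hpos, by omega⟩

end splittingCubic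

-- `h v₊ = h 1`: this is the Rankine–Hugoniot condition that defines `a`.
theorem rankineHugoniot_rpow {γ vp a : ℝ} (hvp0 : 0 < vp) (hvp1 : vp < 1) (hγ : 0 < γ)
    (ha : a = vp ^ γ * (1 - vp) / (1 - vp ^ γ)) :
    -vp ^ (γ + 1) + a * (γ - 1) + (a + 1) * vp ^ γ = a * γ := by
  have hne : 1 - vp ^ γ ≠ 0 := (sub_pos.mpr (Real.rpow_lt_one hvp0.le hvp1 hγ)).ne'
  have haγ : a * (1 - vp ^ γ) = vp ^ γ * (1 - vp) := by rw [ha, div_mul_cancel₀ _ hne]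
  rw [Real.rpow_add hvp0, Real.rpow_one]
  linear_combination -haγ

/-- Consistent splitting: for `γ = 5/3`, `0 < v₊ < 1` and `Re λ > 0`, neither limiting
coefficient matrix `A₋(λ)`, `A₊(λ)` has a purely imaginary eigenvalue; counted with
algebraic multiplicity (as roots of the characteristic polynomial), `A₋(λ)` has exactly
one eigenvalue of positive real part and two of negative real part, while `A₊(λ)` has
exactly two eigenvalues of negative real part and one of positive real part. -/
theorem consistent_splitting
    (γ vp : ℝ) (hγ : γ = 5 / 3) (hvp0 : 0 < vp) (hvp1 : vp < 1)
    (a : ℝ) (ha : a = vp ^ γ * (1 - vp) / (1 - vp ^ γ))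
    (h f : ℝ → ℝ)
    (hh : ∀ v : ℝ, h v = -v ^ (γ + 1) + a * (γ - 1) + (a + 1) * v ^ γ)
    (hf : ∀ v : ℝ, f v = v - v ^ (-γ) * h v)
    (l : ℂ) (hl : 0 < l.re)
    (Am Ap : Matrix (Fin 3) (Fin 3) ℂ)
    (hAm : Am = !![0, l, 1; 0, 0, 1; l, l, (f 1 : ℂ) - l])
    (hAp : Ap = !![0, l, 1; 0, 0, 1; l * (vp : ℂ), l * (vp : ℂ), (f vp : ℂ) - l]) :
    (∀ μ ∈ Am.charpoly.roots, μ.re ≠ 0) ∧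
    (∀ μ ∈ Ap.charpoly.roots, μ.re ≠ 0) ∧
    (Am.charpoly.roots.filter fun μ => 0 < μ.re).card = 1 ∧
    (Am.charpoly.roots.filter fun μ => μ.re < 0).card = 2 ∧
    (Ap.charpoly.roots.filter fun μ => μ.re < 0).card = 2 ∧
    (Ap.charpoly.roots.filter fun μ => 0 < μ.re).card = 1 := by
  have hγ0 : 0 < γ := by norm_num [hγ]
  have ha0 : 0 < a := by
    have := Real.rpow_lt_one hvp0.le hvp1 hγ0
    rw [ha]
    exact div_pos (mul_pos (Real.rpow_pos_of_pos hvp0 γ) (by linarith)) (by linarith)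
  have hf_lt : ∀ v, 0 < v → h v = a * γ → f v < v := fun v hv hhv => by
    rw [hf, hhv, sub_lt_self_iff]
    exact mul_pos (Real.rpow_pos_of_pos hv _) (mul_pos ha0 hγ0)
  have hf1 : f 1 < 1 := hf_lt 1 one_pos (by rw [hh]; simp only [Real.one_rpow]; ring)
  have hfvp : f vp < vp := hf_lt vp hvp0 ((hh vp).trans (rankineHugoniot_rpow hvp0 hvp1 hγ0 ha))
  have hAm' : Am.charpoly = splittingCubic 1 (f 1) l := by
    rw [hAm, ← charpoly_limitMatrix]; simp
  have hAp' : Ap.charpoly = splittingCubic vp (f vp) l := hAp ▸ charpoly_limitMatrix vp (f vp) l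
  obtain ⟨hm_ne, hm_pos, hm_neg⟩ := splittingCubic_roots_split one_pos hf1 hl
  obtain ⟨hp_ne, hp_pos, hp_neg⟩ := splittingCubic_roots_split hvp0 hfvp hl
  rw [hAm', hAp']
  exact ⟨hm_ne, hp_ne, hm_pos, hm_neg, hp_neg, hp_pos⟩
end

section
/- Let n ≥ 1, let B be an n×n complex matrix, let C₁, C₂ > 0, let η̂ < η be real numbers with η > 0, and let M ∈ ℝ. Assume ‖exp(tB)‖ ≤ C₁e^{η̂ t} for all t ≥ 0, and let E : ℝ → (n×n complex matrices) be continuous with ‖E(y)‖ ≤ C₂e^{η y} for all y ≤ M. Fix V₋ ∈ ℂⁿ and, for a bounded continuous function U : (−∞, M] → ℂⁿ, define N(U)(x) = V₋ + ∫_{−∞}^{x} exp((x−y)B) E(y) U(y) dy. Then for all bounded continuous U₁, U₂ : (−∞, M] → ℂⁿ, sup_{x ≤ M} ‖N(U₁)(x) − N(U₂)(x)‖ ≤ q · sup_{x ≤ M} ‖U₁(x) − U₂(x)‖, where q = C₁C₂ e^{ηM}/(η − η̂). -/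
open scoped Matrix.Norms.L2Operator

open MeasureTheory Set

/-! For `y ≤ x ≤ M` the kernel obeys `‖exp((x-y)B) E(y)‖ ≤ C₁C₂ e^{η̂x} e^{(η-η̂)y}`. By linearity
`N(U₁)(x) - N(U₂)(x)` is the integral of this kernel against `U₁ - U₂`, so its norm is at most
`C₁C₂ e^{η̂x} · sup ‖U₁ - U₂‖ · ∫_{-∞}^x e^{(η-η̂)y} dy = C₁C₂ e^{ηx}/(η-η̂) · sup ‖U₁ - U₂‖`,
and `e^{ηx} ≤ e^{ηM}` because `η > 0`. -/

lemma le_biSup_of_forall_le {α ι : Type*} [ConditionallyCompleteLattice α] {f : ι → α}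
    {s : Set ι} {C : α} (hC : ∀ i ∈ s, f i ≤ C) {i : ι} (hi : i ∈ s) :
    f i ≤ ⨆ j ∈ s, f j :=
  le_ciSup₂ (f := fun j (_ : j ∈ s) => f j)
    ⟨C, by rintro _ ⟨_, ⟨j, rfl⟩, ⟨hj, rfl⟩⟩; exact hC j hj⟩ i hi

section ExpWeightedKernel

variable {𝕜 E F : Type*} [RCLike 𝕜] [NormedAddCommGroup E] [NormedSpace 𝕜 E]
  [NormedAddCommGroup F] [NormedSpace 𝕜 F] {T : ℝ → E →L[𝕜] F} {u : ℝ → E} {K S c x : ℝ}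

lemma norm_clm_apply_le_exp (hT : ∀ y ≤ x, ‖T y‖ ≤ K * Real.exp (c * y))
    (hu : ∀ y ≤ x, ‖u y‖ ≤ S) {y : ℝ} (hy : y ≤ x) :
    ‖T y (u y)‖ ≤ K * S * Real.exp (c * y) :=
  calc ‖T y (u y)‖ ≤ K * Real.exp (c * y) * ‖u y‖ := (T y).le_of_opNorm_le (hT y hy) _
    _ ≤ K * Real.exp (c * y) * S :=
        mul_le_mul_of_nonneg_left (hu y hy) ((norm_nonneg _).trans (hT y hy))
    _ = K * S * Real.exp (c * y) := by ring

lemma integrableOn_Iic_clm_apply (hc : 0 < c) (hTc : ContinuousOn T (Iic x))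
    (huc : ContinuousOn u (Iic x)) (hT : ∀ y ≤ x, ‖T y‖ ≤ K * Real.exp (c * y))
    (hu : ∀ y ≤ x, ‖u y‖ ≤ S) :
    IntegrableOn (fun y => T y (u y)) (Iic x) := by
  refine Integrable.mono' ((integrableOn_exp_mul_Iic hc x).const_mul (K * S))
    ((hTc.clm_apply huc).aestronglyMeasurable measurableSet_Iic) ?_
  filter_upwards [ae_restrict_mem measurableSet_Iic] with y hy
  exact norm_clm_apply_le_exp hT hu hy

lemma norm_integral_Iic_clm_apply_le [NormedSpace ℝ F] (hc : 0 < c)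
    (hT : ∀ y ≤ x, ‖T y‖ ≤ K * Real.exp (c * y)) (hu : ∀ y ≤ x, ‖u y‖ ≤ S) :
    ‖∫ y in Iic x, T y (u y)‖ ≤ K * S * Real.exp (c * x) / c := by
  have hbound : ∀ᵐ y ∂volume.restrict (Iic x), ‖T y (u y)‖ ≤ K * S * Real.exp (c * y) := by
    filter_upwards [ae_restrict_mem measurableSet_Iic] with y hy
    exact norm_clm_apply_le_exp hT hu hy
  calc ‖∫ y in Iic x, T y (u y)‖ ≤ ∫ y in Iic x, K * S * Real.exp (c * y) :=
        norm_integral_le_of_norm_le ((integrableOn_exp_mul_Iic hc x).const_mul _) hbound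
    _ = K * S * Real.exp (c * x) / c := by
        rw [integral_const_mul, integral_exp_mul_Iic hc, mul_div_assoc]

end ExpWeightedKernel

section DuhamelKernel

variable {n : ℕ} (B : Matrix (Fin n) (Fin n) ℂ) (E : ℝ → Matrix (Fin n) (Fin n) ℂ)

noncomputable def duhamelKernel (x y : ℝ) :
    EuclideanSpace ℂ (Fin n) →L[ℂ] EuclideanSpace ℂ (Fin n) :=
  Matrix.toEuclideanCLM (𝕜 := ℂ) (NormedSpace.exp (((x - y : ℝ) : ℂ) • B) * E y)

lemma continuous_duhamelKernel (hE : Continuous E) (x : ℝ) :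
    Continuous (duhamelKernel B E x) := by
  -- `NormedSpace.exp_continuous` is stated for normed `ℚ`-algebras.
  let : NormedAlgebra ℚ (Matrix (Fin n) (Fin n) ℂ) := NormedAlgebra.restrictScalars ℚ ℂ _
  have hexp : Continuous fun y : ℝ => NormedSpace.exp (((x - y : ℝ) : ℂ) • B) :=
    NormedSpace.exp_continuous.comp (by fun_prop)
  exact (AddMonoidHomClass.isometry_of_norm Matrix.toEuclideanCLM fun _ => rfl).continuous.comp
    (hexp.mul hE)

lemma norm_duhamelKernel_le {C₁ C₂ ηhat η M x y : ℝ}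
    (hB : ∀ t : ℝ, 0 ≤ t → ‖NormedSpace.exp ((t : ℂ) • B)‖ ≤ C₁ * Real.exp (ηhat * t))
    (hE : ∀ y : ℝ, y ≤ M → ‖E y‖ ≤ C₂ * Real.exp (η * y)) (hxM : x ≤ M) (hyx : y ≤ x) :
    ‖duhamelKernel B E x y‖ ≤ C₁ * C₂ * Real.exp (ηhat * x) * Real.exp ((η - ηhat) * y) :=
  calc ‖duhamelKernel B E x y‖ = ‖NormedSpace.exp (((x - y : ℝ) : ℂ) • B) * E y‖ := rfl
    _ ≤ ‖NormedSpace.exp (((x - y : ℝ) : ℂ) • B)‖ * ‖E y‖ := norm_mul_le _ _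
    _ ≤ C₁ * Real.exp (ηhat * (x - y)) * (C₂ * Real.exp (η * y)) :=
        mul_le_mul (hB _ (sub_nonneg.2 hyx)) (hE y (hyx.trans hxM)) (norm_nonneg _)
          ((norm_nonneg _).trans (hB _ (sub_nonneg.2 hyx)))
    _ = C₁ * C₂ * Real.exp (ηhat * x) * Real.exp ((η - ηhat) * y) := by
        rw [mul_assoc (C₁ * C₂), ← Real.exp_add,
          show ηhat * x + (η - ηhat) * y = ηhat * (x - y) + η * y by ring, Real.exp_add]
        ring

end DuhamelKernel

theorem duhamel_contraction_general
    (n : ℕ)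
    (B : Matrix (Fin n) (Fin n) ℂ)
    (C₁ C₂ : ℝ) (hC₁ : 0 < C₁) (hC₂ : 0 < C₂)
    (ηhat η : ℝ) (hηη : ηhat < η) (hη : 0 < η)
    (M : ℝ)
    (hB : ∀ t : ℝ, 0 ≤ t → ‖NormedSpace.exp ((t : ℂ) • B)‖ ≤ C₁ * Real.exp (ηhat * t))
    (Emat : ℝ → Matrix (Fin n) (Fin n) ℂ)
    (hEcont : Continuous Emat)
    (hEbnd : ∀ y : ℝ, y ≤ M → ‖Emat y‖ ≤ C₂ * Real.exp (η * y))
    (Vm : EuclideanSpace ℂ (Fin n))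
    (N : (ℝ → EuclideanSpace ℂ (Fin n)) → ℝ → EuclideanSpace ℂ (Fin n))
    (hN : ∀ (U : ℝ → EuclideanSpace ℂ (Fin n)) (x : ℝ),
      N U x = Vm + ∫ y in Set.Iic x,
        (Matrix.toEuclideanCLM (𝕜 := ℂ)
          (NormedSpace.exp (((x - y : ℝ) : ℂ) • B) * Emat y)) (U y))
    (U₁ U₂ : ℝ → EuclideanSpace ℂ (Fin n))
    (hU₁c : ContinuousOn U₁ (Set.Iic M)) (hU₁b : ∃ C, ∀ x ≤ M, ‖U₁ x‖ ≤ C)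
    (hU₂c : ContinuousOn U₂ (Set.Iic M)) (hU₂b : ∃ C, ∀ x ≤ M, ‖U₂ x‖ ≤ C) :
    ⨆ x ∈ Set.Iic M, ‖N U₁ x - N U₂ x‖ ≤
      (C₁ * C₂ * Real.exp (η * M) / (η - ηhat)) * ⨆ x ∈ Set.Iic M, ‖U₁ x - U₂ x‖ := by
  obtain ⟨K₁, hK₁⟩ := hU₁b
  obtain ⟨K₂, hK₂⟩ := hU₂b
  set S := ⨆ x ∈ Iic M, ‖U₁ x - U₂ x‖
  have hgap : 0 < η - ηhat := sub_pos.2 hηη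
  have hS : ∀ y ≤ M, ‖U₁ y - U₂ y‖ ≤ S := fun y hy =>
    le_biSup_of_forall_le (fun z hz => (norm_sub_le _ _).trans (add_le_add (hK₁ z hz) (hK₂ z hz)))
      (mem_Iic.2 hy)
  have hS0 : 0 ≤ S := (norm_nonneg _).trans (hS M le_rfl)
  have hqS : 0 ≤ C₁ * C₂ * Real.exp (η * M) / (η - ηhat) * S := by positivity
  refine Real.iSup_le (fun x => Real.iSup_le (fun hxM => ?_) hqS) hqS
  have hT := fun y (hy : y ≤ x) => norm_duhamelKernel_le B Emat hB hEbnd hxM hy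
  have hTc := (continuous_duhamelKernel B Emat hEcont x).continuousOn (s := Iic x)
  have hIic : Iic x ⊆ Iic M := Iic_subset_Iic.2 hxM
  have hsub : N U₁ x - N U₂ x = ∫ y in Iic x, duhamelKernel B Emat x y (U₁ y - U₂ y) := by
    simp only [hN, add_sub_add_left_eq_sub, map_sub]
    exact (integral_sub
      (integrableOn_Iic_clm_apply hgap hTc (hU₁c.mono hIic) hT fun y hy => hK₁ y (hy.trans hxM))
      (integrableOn_Iic_clm_apply hgap hTc (hU₂c.mono hIic) hT fun y hy => hK₂ y (hy.trans hxM))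
      ).symm
  calc ‖N U₁ x - N U₂ x‖
      ≤ C₁ * C₂ * Real.exp (ηhat * x) * S * Real.exp ((η - ηhat) * x) / (η - ηhat) :=
        hsub ▸ norm_integral_Iic_clm_apply_le hgap hT fun y hy => hS y (hy.trans hxM)
    _ = C₁ * C₂ * Real.exp (η * x) / (η - ηhat) * S := by
        rw [show η * x = ηhat * x + (η - ηhat) * x by ring, Real.exp_add]
        ring
    _ ≤ C₁ * C₂ * Real.exp (η * M) / (η - ηhat) * S := by
        gcongr
        exact hxM

/-- Contraction estimate for the Duhamel fixed-point operator
`N(U)(x) = V₋ + ∫_{−∞}^x exp((x−y)B) E(y) U(y) dy` on bounded continuous functions on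
`(−∞, M]`: `sup_{x ≤ M} ‖N(U₁)(x) − N(U₂)(x)‖ ≤ q · sup_{x ≤ M} ‖U₁(x) − U₂(x)‖` with
`q = C₁C₂ e^{ηM}/(η − η̂)`. All norms are Euclidean (ℓ²) norms. -/
theorem duhamel_contraction
    (n : ℕ) (hn : 1 ≤ n)
    (B : Matrix (Fin n) (Fin n) ℂ)
    (C₁ C₂ : ℝ) (hC₁ : 0 < C₁) (hC₂ : 0 < C₂)
    (ηhat η : ℝ) (hηη : ηhat < η) (hη : 0 < η)
    (M : ℝ)
    (hB : ∀ t : ℝ, 0 ≤ t → ‖NormedSpace.exp ((t : ℂ) • B)‖ ≤ C₁ * Real.exp (ηhat * t))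
    (Emat : ℝ → Matrix (Fin n) (Fin n) ℂ)
    (hEcont : Continuous Emat)
    (hEbnd : ∀ y : ℝ, y ≤ M → ‖Emat y‖ ≤ C₂ * Real.exp (η * y))
    (Vm : EuclideanSpace ℂ (Fin n))
    (N : (ℝ → EuclideanSpace ℂ (Fin n)) → ℝ → EuclideanSpace ℂ (Fin n))
    (hN : ∀ (U : ℝ → EuclideanSpace ℂ (Fin n)) (x : ℝ),
      N U x = Vm + ∫ y in Set.Iic x,
        (Matrix.toEuclideanCLM (𝕜 := ℂ)
          (NormedSpace.exp (((x - y : ℝ) : ℂ) • B) * Emat y)) (U y))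
    (U₁ U₂ : ℝ → EuclideanSpace ℂ (Fin n))
    (hU₁c : ContinuousOn U₁ (Set.Iic M)) (hU₁b : ∃ C, ∀ x ≤ M, ‖U₁ x‖ ≤ C)
    (hU₂c : ContinuousOn U₂ (Set.Iic M)) (hU₂b : ∃ C, ∀ x ≤ M, ‖U₂ x‖ ≤ C) :
    ⨆ x ∈ Set.Iic M, ‖N U₁ x - N U₂ x‖ ≤
      (C₁ * C₂ * Real.exp (η * M) / (η - ηhat)) * ⨆ x ∈ Set.Iic M, ‖U₁ x - U₂ x‖ :=
  duhamel_contraction_general n B C₁ C₂ hC₁ hC₂ ηhat η hηη hη M hB Emat hEcont hEbnd Vm N hN U₁ U₂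
    hU₁c hU₁b hU₂c hU₂b
end

section
/- Let n ≥ 1, let B be an n×n complex matrix with ‖exp(tB)‖ ≤ C₁ for all t ≥ 0 (some C₁ > 0), and suppose B·V₋ = 0 for a vector V₋ ∈ ℂⁿ. Let E : ℝ → (n×n complex matrices) be continuous with ‖E(y)‖ ≤ C₂e^{η y} for all y ≤ M, where C₂ > 0, η > 0 and M ∈ ℝ. Let V : (−∞, M] → ℂⁿ be a bounded differentiable solution of V′(x) = (B + E(x))V(x) with V(x) → V₋ as x → −∞. Then for every x ≤ M, V(x) = V₋ + ∫_{−∞}^{x} exp((x−y)B) E(y) V(y) dy. -/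
/-! Put `W y = exp ((x - y) B) V y`. Differentiating, the two `B V` terms cancel and
`W' y = exp ((x - y) B) E y V y`, which is integrable on `(-∞, x]` because `E` decays
exponentially while `exp (t B)` (`t ≥ 0`) and `V` stay bounded. Moreover `W x = V x`, and
`W y → V₋` as `y → -∞` since `exp (t B)` fixes `V₋` and is uniformly bounded. The fundamental
theorem of calculus on `(-∞, x]` then gives the identity. -/

open Filter Topology Set MeasureTheory NormedSpace
open scoped Matrix.Norms.L2Operator

namespace Matrix

variable {n 𝕜 : Type*} [Fintype n] [DecidableEq n] [RCLike 𝕜]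

theorem continuous_toEuclideanCLM : Continuous (toEuclideanCLM (n := n) (𝕜 := 𝕜)) :=
  (AddMonoidHomClass.isometry_of_norm _ fun _ => rfl).continuous

theorem toEuclideanCLM_exp (A : Matrix n n 𝕜) :
    toEuclideanCLM (𝕜 := 𝕜) (exp A) = exp (toEuclideanCLM (𝕜 := 𝕜) A) :=
  map_exp_of_mem_ball (𝕂 := 𝕜) _ continuous_toEuclideanCLM A <|
    (expSeries_radius_eq_top 𝕜 (Matrix n n 𝕜)).symm ▸ edist_lt_top _ _

end Matrix

theorem exp_smul_apply_of_apply_eq_zero {𝕜 E : Type*} [RCLike 𝕜] [NormedAddCommGroup E]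
    [NormedSpace 𝕜 E] [CompleteSpace E] {b : E →L[𝕜] E} {v : E} (hv : b v = 0) (s : 𝕜) :
    exp (s • b) v = v := by
  have hderiv (t : 𝕜) : HasDerivAt (fun t : 𝕜 => exp (t • b) v) 0 t := by
    simpa [hv] using (hasDerivAt_exp_smul_const b t).clm_apply (hasDerivAt_const t v)
  simpa using is_const_of_deriv_eq_zero (fun t => (hderiv t).differentiableAt)
    (fun t => (hderiv t).deriv) s 0

theorem hasDerivAt_exp_ofReal_sub_smul {𝔸 : Type*} [NormedRing 𝔸] [NormedAlgebra ℂ 𝔸]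
    [CompleteSpace 𝔸] (a : 𝔸) (x y : ℝ) :
    HasDerivAt (fun y : ℝ => exp (((x - y : ℝ) : ℂ) • a))
      (-(exp (((x - y : ℝ) : ℂ) • a) * a)) y := by
  have hsub : HasDerivAt (fun y : ℝ => ((x - y : ℝ) : ℂ)) (-1) y := by
    simpa using ((hasDerivAt_id y).const_sub x).ofReal_comp
  simpa [Function.comp_def] using (hasDerivAt_exp_smul_const a ((x - y : ℝ) : ℂ)).scomp y hsub

theorem integrableOn_Iic_of_norm_le_exp {E : Type*} [NormedAddCommGroup E] {f : ℝ → E}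
    {x η K : ℝ} (hη : 0 < η) (hf : ContinuousOn f (Iic x))
    (hbound : ∀ y ≤ x, ‖f y‖ ≤ K * Real.exp (η * y)) : IntegrableOn f (Iic x) :=
  ((integrableOn_exp_mul_Iic hη x).const_mul K).mono' (hf.aestronglyMeasurable measurableSet_Iic)
    ((ae_restrict_iff' measurableSet_Iic).2 (.of_forall hbound))

section VariationOfConstants

variable {E : Type*} [NormedAddCommGroup E] [NormedSpace ℂ E] [CompleteSpace E]
  {b : E →L[ℂ] E} {V : ℝ → E} {x : ℝ}

theorem hasDerivWithinAt_exp_ofReal_sub_smul_apply {f : E} {s : Set ℝ} {y : ℝ}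
    (hV : HasDerivWithinAt V (b (V y) + f) s y) :
    HasDerivWithinAt (fun y => exp (((x - y : ℝ) : ℂ) • b) (V y))
      (exp (((x - y : ℝ) : ℂ) • b) f) s y := by
  -- the product rule `clm_apply` needs `ℝ`-linear operators
  let L := ContinuousLinearMap.restrictScalarsL ℂ E E ℝ ℝ
  have hA := (L.hasFDerivAt.comp_hasDerivAt y
    (hasDerivAt_exp_ofReal_sub_smul b x y)).hasDerivWithinAt (s := s)
  refine (hA.clm_apply hV).congr_deriv ?_
  change -(exp (((x - y : ℝ) : ℂ) • b) * b) (V y)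
    + exp (((x - y : ℝ) : ℂ) • b) (b (V y) + f) = _
  simp

theorem eq_add_integral_Iic_exp_ofReal_sub_smul_apply {f : ℝ → E} {v : E}
    (hV : ∀ y ≤ x, HasDerivWithinAt V (b (V y) + f y) (Iic x) y)
    (hint : IntegrableOn (fun y => exp (((x - y : ℝ) : ℂ) • b) (f y)) (Iic x))
    (hlim : Tendsto (fun y => exp (((x - y : ℝ) : ℂ) • b) (V y)) atBot (𝓝 v)) :
    V x = v + ∫ y in Iic x, exp (((x - y : ℝ) : ℂ) • b) (f y) := by
  have hW (y : ℝ) (hy : y ≤ x) := hasDerivWithinAt_exp_ofReal_sub_smul_apply (x := x) (hV y hy)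
  rw [integral_Iic_of_hasDerivAt_of_tendsto (hW x le_rfl).continuousWithinAt
    (fun y hy => (hW y hy.out.le).hasDerivAt (Iic_mem_nhds hy.out)) hint hlim]
  simp

theorem tendsto_exp_ofReal_sub_smul_apply_atBot {C : ℝ}
    (hb : ∀ t : ℝ, 0 ≤ t → ‖exp ((t : ℂ) • b)‖ ≤ C) {v : E} (hv : b v = 0)
    (hV : Tendsto V atBot (𝓝 v)) :
    Tendsto (fun y => exp (((x - y : ℝ) : ℂ) • b) (V y)) atBot (𝓝 v) := by
  rw [tendsto_iff_norm_sub_tendsto_zero] at hV ⊢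
  refine squeeze_zero' (.of_forall fun _ => norm_nonneg _) ?_ (by simpa using hV.const_mul C)
  filter_upwards [Iic_mem_atBot x] with y hy
  calc ‖exp (((x - y : ℝ) : ℂ) • b) (V y) - v‖
      = ‖exp (((x - y : ℝ) : ℂ) • b) (V y - v)‖ := by
        rw [map_sub, exp_smul_apply_of_apply_eq_zero hv]
    _ ≤ C * ‖V y - v‖ := ContinuousLinearMap.le_of_opNorm_le _ (hb _ (sub_nonneg.2 hy)) _

theorem integrableOn_Iic_exp_ofReal_sub_smul_apply {F : ℝ → E →L[ℂ] E} {C₁ K C η : ℝ}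
    (hη : 0 < η) (hb : ∀ t : ℝ, 0 ≤ t → ‖exp ((t : ℂ) • b)‖ ≤ C₁)
    (hF : ContinuousOn F (Iic x)) (hFle : ∀ y ≤ x, ‖F y‖ ≤ K * Real.exp (η * y))
    (hV : ContinuousOn V (Iic x)) (hVle : ∀ y ≤ x, ‖V y‖ ≤ C) :
    IntegrableOn (fun y => exp (((x - y : ℝ) : ℂ) • b) (F y (V y))) (Iic x) := by
  have hexp : Continuous fun y : ℝ => exp (((x - y : ℝ) : ℂ) • b) :=
    continuous_iff_continuousAt.2 fun y => (hasDerivAt_exp_ofReal_sub_smul b x y).continuousAt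
  refine integrableOn_Iic_of_norm_le_exp (K := C₁ * K * C) hη
    (hexp.continuousOn.clm_apply (hF.clm_apply hV)) fun y hy => ?_
  have hFy := hFle y hy
  have hK : 0 ≤ K * Real.exp (η * y) := (norm_nonneg _).trans hFy
  have hC₁ : 0 ≤ C₁ := (norm_nonneg _).trans (hb 0 le_rfl)
  calc ‖exp (((x - y : ℝ) : ℂ) • b) (F y (V y))‖
      ≤ ‖exp (((x - y : ℝ) : ℂ) • b)‖ * (‖F y‖ * ‖V y‖) :=
        (ContinuousLinearMap.le_opNorm _ _).trans
          (by gcongr; exact ContinuousLinearMap.le_opNorm _ _)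
    _ ≤ C₁ * (K * Real.exp (η * y) * C) := by
        gcongr
        exacts [hb _ (sub_nonneg.2 hy), hVle y hy]
    _ = C₁ * K * C * Real.exp (η * y) := by ring

end VariationOfConstants

theorem duhamel_identity_general
    (n : ℕ)
    (B : Matrix (Fin n) (Fin n) ℂ)
    (C₁ : ℝ)
    (hB : ∀ t : ℝ, 0 ≤ t → ‖NormedSpace.exp ((t : ℂ) • B)‖ ≤ C₁)
    (Vm : EuclideanSpace ℂ (Fin n))
    (hVm : Matrix.toEuclideanCLM (𝕜 := ℂ) B Vm = 0)
    (C₂ η M : ℝ) (hη : 0 < η)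
    (Emat : ℝ → Matrix (Fin n) (Fin n) ℂ)
    (hEcont : Continuous Emat)
    (hEbnd : ∀ y : ℝ, y ≤ M → ‖Emat y‖ ≤ C₂ * Real.exp (η * y))
    (V : ℝ → EuclideanSpace ℂ (Fin n))
    (hVbnd : ∃ C, ∀ x ≤ M, ‖V x‖ ≤ C)
    (hVode : ∀ x ≤ M, HasDerivWithinAt V
      (Matrix.toEuclideanCLM (𝕜 := ℂ) (B + Emat x) (V x)) (Set.Iic M) x)
    (hVlim : Tendsto V atBot (𝓝 Vm)) :
    ∀ x ≤ M, V x = Vm + ∫ y in Set.Iic x,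
      (Matrix.toEuclideanCLM (𝕜 := ℂ)
        (NormedSpace.exp (((x - y : ℝ) : ℂ) • B) * Emat y)) (V y) := by
  intro x hx
  obtain ⟨C, hC⟩ := hVbnd
  set b := Matrix.toEuclideanCLM (𝕜 := ℂ) B
  have hexp (s : ℂ) : Matrix.toEuclideanCLM (𝕜 := ℂ) (exp (s • B)) = exp (s • b) := by
    rw [Matrix.toEuclideanCLM_exp, map_smul]
  have hb (t : ℝ) (ht : 0 ≤ t) : ‖exp ((t : ℂ) • b)‖ ≤ C₁ := hexp t ▸ hB t ht
  have hVcont : ContinuousOn V (Iic x) := fun y hy =>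
    (hVode y (hy.out.trans hx)).continuousWithinAt.mono (Iic_subset_Iic.2 hx)
  simp only [map_mul, hexp]
  refine eq_add_integral_Iic_exp_ofReal_sub_smul_apply (fun y hy => ?_)
    (integrableOn_Iic_exp_ofReal_sub_smul_apply hη hb
      (Matrix.continuous_toEuclideanCLM.comp hEcont).continuousOn
      (fun y hy => hEbnd y (hy.trans hx)) hVcont fun y hy => hC y (hy.trans hx))
    (tendsto_exp_ofReal_sub_smul_apply_atBot hb hVm hVlim)
  simpa [b] using (hVode y (hy.trans hx)).mono (Iic_subset_Iic.2 hx)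

/-- Duhamel-principle identity: a bounded solution of `V′ = (B + E(x))V` on `(−∞, M]`
converging to `V₋` at `−∞`, where `BV₋ = 0`, `‖exp(tB)‖ ≤ C₁` for `t ≥ 0` and
`‖E(y)‖ ≤ C₂ e^{ηy}`, satisfies `V(x) = V₋ + ∫_{−∞}^x exp((x−y)B) E(y) V(y) dy`.
All norms are Euclidean (ℓ²) norms. -/
theorem duhamel_identity
    (n : ℕ) (hn : 1 ≤ n)
    (B : Matrix (Fin n) (Fin n) ℂ)
    (C₁ : ℝ) (hC₁ : 0 < C₁)
    (hB : ∀ t : ℝ, 0 ≤ t → ‖NormedSpace.exp ((t : ℂ) • B)‖ ≤ C₁)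
    (Vm : EuclideanSpace ℂ (Fin n))
    (hVm : Matrix.toEuclideanCLM (𝕜 := ℂ) B Vm = 0)
    (C₂ η M : ℝ) (hC₂ : 0 < C₂) (hη : 0 < η)
    (Emat : ℝ → Matrix (Fin n) (Fin n) ℂ)
    (hEcont : Continuous Emat)
    (hEbnd : ∀ y : ℝ, y ≤ M → ‖Emat y‖ ≤ C₂ * Real.exp (η * y))
    (V : ℝ → EuclideanSpace ℂ (Fin n))
    (hVbnd : ∃ C, ∀ x ≤ M, ‖V x‖ ≤ C)
    (hVode : ∀ x ≤ M, HasDerivWithinAt V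
      (Matrix.toEuclideanCLM (𝕜 := ℂ) (B + Emat x) (V x)) (Set.Iic M) x)
    (hVlim : Tendsto V atBot (𝓝 Vm)) :
    ∀ x ≤ M, V x = Vm + ∫ y in Set.Iic x,
      (Matrix.toEuclideanCLM (𝕜 := ℂ)
        (NormedSpace.exp (((x - y : ℝ) : ℂ) • B) * Emat y)) (V y) :=
  duhamel_identity_general n B C₁ hB Vm hVm C₂ η M hη Emat hEcont hEbnd V hVbnd hVode hVlim
end
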